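/- Let 𝔊¹(R) be the set of sequences (r₁, r₂, …) with r₁ ∈ R^× and rₙ ∈ R for n ≥ 2, identified with power series ∑ rₙ zⁿ, with multiplication given by boxed convolution ⊠ (coefficients X_w(f⊠g) = ∑_{π∈NC(|w|)} X_{w,π}(f)·X_{w,K(π)}(g)). Then 𝔊¹(R) is a group with identity z (the series with r₁ = 1, rₙ = 0 for n ≥ 2), and for s = 1 this group is abelian. -/

import Mathlib

open Finset

/-- A family of blocks in `Fin m` is non-crossing: there are no `a < b < c < d` with
`a, c` in one block and `b, d` in a different block of the family. -/
def IsNCFamily {m : ℕ} (P : Finset (Finset (Fin m))) : Prop :=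
  ¬ ∃ (a b c d : Fin m) (B₁ B₂ : Finset (Fin m)),
      a < b ∧ b < c ∧ c < d ∧ B₁ ∈ P ∧ B₂ ∈ P ∧ B₁ ≠ B₂ ∧
      a ∈ B₁ ∧ c ∈ B₁ ∧ b ∈ B₂ ∧ d ∈ B₂

/-- A partition of `{1,…,n}` is non-crossing. -/
def IsNoncrossing {n : ℕ} (π : Finpartition (univ : Finset (Fin n))) : Prop :=
  IsNCFamily π.parts

/-- The lattice `NC(n)` of non-crossing partitions of `{1,…,n}`. -/
abbrev NCPart (n : ℕ) : Type :=
  {π : Finpartition (univ : Finset (Fin n)) // IsNoncrossing π}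

/-- `i ↦ 2i`: the unprimed (even) positions in the interleaved set `1, 1̄, …, n, n̄`. -/
def evenEmb {n : ℕ} (i : Fin n) : Fin (2 * n) := ⟨2 * i, by omega⟩

/-- `i ↦ 2i+1`: the primed (odd) positions in the interleaved set. -/
def oddEmb {n : ℕ} (i : Fin n) : Fin (2 * n) := ⟨2 * i + 1, by omega⟩

/-- `σ` (on the primed copies) is Kreweras-compatible with `π`: the interleaved union
`π ∪ σ̄` is a non-crossing family on `1, 1̄, 2, 2̄, …, n, n̄`. -/
def KrewCompat {n : ℕ} (π σ : Finpartition (univ : Finset (Fin n))) : Prop :=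
  IsNCFamily ((π.parts.image fun B => B.image evenEmb) ∪
    (σ.parts.image fun B => B.image oddEmb))

open Classical in
/-- The Kreweras complement `K(π)`: the greatest non-crossing partition whose interleaved
union with `π` is non-crossing. -/
noncomputable def kreweras {n : ℕ} (π : NCPart n) : NCPart n :=
  if h : ∃ σ : NCPart n, IsGreatest {σ : NCPart n | KrewCompat π.1 σ.1} σ then h.choose
  else π

variable {R : Type*} [CommRing R]

/-- The boxed convolution in one variable:
`(f ⊠ g)ₙ = ∑_{π ∈ NC(n)} ∏_{V ∈ π} f_{|V|} · ∏_{W ∈ K(π)} g_{|W|}` (on series with zero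
constant term, i.e. coefficients indexed by `n ≥ 1`). -/
noncomputable def boxConv (f g : PowerSeries R) : PowerSeries R :=
  PowerSeries.mk fun n =>
    if n = 0 then 0
    else ∑ᶠ π : NCPart n,
      (∏ V ∈ π.1.parts, PowerSeries.coeff V.card f) *
        ∏ W ∈ (kreweras π).1.parts, PowerSeries.coeff W.card g

/-- Membership in `𝔊¹(R)`: series `∑_{n≥1} rₙ zⁿ` with `r₁ ∈ R^×`. -/
def memG1 (f : PowerSeries R) : Prop :=
  PowerSeries.constantCoeff f = 0 ∧ IsUnit (PowerSeries.coeff 1 f)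

/-!
Write `K` for the Kreweras complement and `f_π = ∏_{V ∈ π} f_{|V|}`. Concretely, `K(π)` is the
partition into the classes of `b ∼ d :⇔ (min b d, max b d]` is a union of blocks of `π`: it is
the largest partition compatible with `π`, and `|π| + |K(π)| = n + 1` for noncrossing `π`.
Reversing the order of `1, 1̄, …, n, n̄` exchanges the two sides of compatibility, so `K` is a
bijection of `NC(n)` with inverse `σ ↦ K(σ̄)̄`; reindexing by it gives commutativity.
In `z ⊠ f` only `π = 0̂` contributes and in `f ⊠ z` only `π = 1̂`, since `K(0̂) = 1̂`.
For associativity, expanding `∏_{V ∈ π} (f ⊠ g)_{|V|}` over partitions of the blocks gives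
`∑_{σ ≤ π} f_σ g_{π ∧ K(σ)}`, and `π ↦ π ∧ K(σ)` is a bijection `[σ, 1̂] → [0̂, K(σ)]` with
`K(π) = K(σ) ∧ K(π ∧ K(σ))`. Finally the `m`-th coefficient of `f ⊠ g` is `f₁^m g_m` plus terms
in the `g_k` with `k < m`, so `f ⊠ g = z` can be solved recursively when `f₁` is a unit.
-/

open scoped symmDiff

namespace Finpartition

section bind

variable {α : Type*} [DecidableEq α] {s : Finset α}

lemma bind_le (P : Finpartition s) (Q : ∀ V ∈ P.parts, Finpartition V) : P.bind Q ≤ P := by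
  intro B hB
  obtain ⟨V, hV, hB'⟩ := mem_bind.1 hB
  exact ⟨V, hV, (Q V hV).le hB'⟩

lemma prod_bind_parts {M : Type*} [CommMonoid M] (P : Finpartition s)
    (Q : ∀ V ∈ P.parts, Finpartition V) (f : Finset α → M) :
    ∏ B ∈ (P.bind Q).parts, f B = ∏ V ∈ P.parts.attach, ∏ B ∈ (Q V.1 V.2).parts, f B := by
  rw [bind_parts]
  refine prod_biUnion fun V _ W _ hVW => disjoint_left.2 fun B hBV hBW => ?_
  have hd := P.disjoint V.2 W.2 fun h => hVW (Subtype.ext h)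
  exact (Q V.1 V.2).ne_bot hBV (eq_bot_iff.2
    ((le_inf ((Q V.1 V.2).le hBV) ((Q W.1 W.2).le hBW)).trans hd.le_bot))

end bind

variable {α : Type*} [Fintype α] [DecidableEq α]

section univ

variable (P : Finpartition (univ : Finset α))

lemma part_mem_parts (a : α) : P.part a ∈ P.parts := P.part_mem.2 (mem_univ a)

lemma mem_part_univ (a : α) : a ∈ P.part a := P.mem_part (mem_univ a)

lemma parts_eq_image_part : P.parts = univ.image P.part := by
  ext B
  simp only [mem_image, mem_univ, true_and]
  refine ⟨fun hB => ?_, fun ⟨a, ha⟩ => ha ▸ P.part_mem_parts a⟩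
  obtain ⟨a, ha⟩ := P.nonempty_of_mem_parts hB
  exact ⟨a, P.part_eq_of_mem hB ha⟩

lemma card_parts_eq_card_filter (p : α → Prop) [DecidablePred p]
    (hp : ∀ B ∈ P.parts, ∃! a, a ∈ B ∧ p a) : #P.parts = #{a | p a} := by
  symm
  refine card_bij (fun a _ => P.part a) (fun a _ => P.part_mem_parts a) ?_ ?_
  · intro a ha b hb hab
    exact (hp _ (P.part_mem_parts a)).unique ⟨P.mem_part_univ a, (mem_filter.1 ha).2⟩
      ⟨hab ▸ P.mem_part_univ b, (mem_filter.1 hb).2⟩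
  · intro B hB
    obtain ⟨a, ⟨haB, hpa⟩, -⟩ := hp B hB
    exact ⟨a, mem_filter.2 ⟨mem_univ a, hpa⟩, P.part_eq_of_mem hB haB⟩

section LinearOrder

variable [LinearOrder α]

lemma card_parts_eq_card_filter_max [DecidablePred fun a => ∀ b ∈ P.part a, b ≤ a] :
    #P.parts = #{a | ∀ b ∈ P.part a, b ≤ a} := by
  refine P.card_parts_eq_card_filter _ fun B hB => ?_
  have hne := P.nonempty_of_mem_parts hB
  refine ⟨B.max' hne, ⟨B.max'_mem hne, fun b hb => ?_⟩, fun a ⟨haB, ha⟩ => ?_⟩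
  · rw [P.part_eq_of_mem hB (B.max'_mem hne)] at hb
    exact B.le_max' b hb
  · rw [P.part_eq_of_mem hB haB] at ha
    exact (B.le_max' a haB).antisymm (ha _ (B.max'_mem hne))

lemma card_parts_eq_card_filter_min [DecidablePred fun a => ∀ b ∈ P.part a, a ≤ b] :
    #P.parts = #{a | ∀ b ∈ P.part a, a ≤ b} := by
  refine P.card_parts_eq_card_filter _ fun B hB => ?_
  have hne := P.nonempty_of_mem_parts hB
  refine ⟨B.min' hne, ⟨B.min'_mem hne, fun b hb => ?_⟩, fun a ⟨haB, ha⟩ => ?_⟩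
  · rw [P.part_eq_of_mem hB (B.min'_mem hne)] at hb
    exact B.min'_le b hb
  · rw [P.part_eq_of_mem hB haB] at ha
    exact (ha _ (B.min'_mem hne)).antisymm (B.min'_le a haB)

end LinearOrder

variable {P} {Q : Finpartition (univ : Finset α)}

lemma part_eq_part_of_mem {a b : α} (h : b ∈ P.part a) : P.part b = P.part a :=
  P.part_eq_of_mem (P.part_mem_parts a) h

lemma ext_part (h : ∀ a, P.part a = Q.part a) : P = Q := by
  ext B
  rw [parts_eq_image_part P, parts_eq_image_part Q, funext h]

lemma part_subset_part_of_le (h : P ≤ Q) (a : α) : P.part a ⊆ Q.part a := by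
  obtain ⟨C, hC, hsub⟩ := h (P.part_mem_parts a)
  rwa [Q.part_eq_of_mem hC (hsub (P.mem_part_univ a))]

lemma part_inf (a : α) : (P ⊓ Q).part a = P.part a ∩ Q.part a := by
  have ha : a ∈ P.part a ∩ Q.part a := mem_inter.2 ⟨P.mem_part_univ a, Q.mem_part_univ a⟩
  refine (P ⊓ Q).part_eq_of_mem ?_ ha
  rw [parts_inf]
  exact mem_erase.2 ⟨ne_empty_of_mem ha, mem_image.2
    ⟨(P.part a, Q.part a), mem_product.2 ⟨P.part_mem_parts a, Q.part_mem_parts a⟩, rfl⟩⟩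

lemma part_bot (a : α) : (⊥ : Finpartition (univ : Finset α)).part a = {a} :=
  part_eq_of_mem _ (mem_bot_iff.2 ⟨a, mem_univ a, rfl⟩) (mem_singleton_self a)

lemma parts_top_univ [Nonempty α] :
    (⊤ : Finpartition (univ : Finset α)).parts = {univ} :=
  (subset_singleton_iff.1 (parts_top_subset _)).resolve_left
    (parts_nonempty_iff.2 univ_nonempty.ne_empty).ne_empty

lemma part_top (a : α) : (⊤ : Finpartition (univ : Finset α)).part a = univ := by
  have : Nonempty α := ⟨a⟩
  exact part_eq_of_mem _ (by rw [parts_top_univ]; exact mem_singleton_self _) (mem_univ a)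

lemma eq_top_of_univ_mem_parts (h : univ ∈ P.parts) : P = ⊤ := by
  obtain ⟨a, -⟩ := P.nonempty_of_mem_parts h
  have : Nonempty α := ⟨a⟩
  ext B
  rw [parts_top_univ, mem_singleton]
  refine ⟨fun hB => ?_, fun hB => hB ▸ h⟩
  obtain ⟨b, hb⟩ := P.nonempty_of_mem_parts hB
  exact P.eq_of_mem_parts hB h hb (mem_univ b)

lemma eq_bot_of_forall_card_eq_one (h : ∀ B ∈ P.parts, #B = 1) : P = ⊥ := by
  refine ext_part fun a => ?_
  obtain ⟨b, hb⟩ := card_eq_one.1 (h _ (P.part_mem_parts a))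
  have ha := P.mem_part_univ a
  rw [hb, mem_singleton] at ha
  rw [part_bot, hb, ha]

lemma eq_of_le_of_card_parts_le (h : P ≤ Q) (hc : #P.parts ≤ #Q.parts) : P = Q := by
  let f : ∀ B ∈ P.parts, Finset α := fun B hB =>
    Q.part ((P.nonempty_of_mem_parts hB).choose)
  have hfB : ∀ B (hB : B ∈ P.parts), B ⊆ f B hB := fun B hB => by
    obtain ⟨C, hC, hBC⟩ := h hB
    show B ⊆ Q.part _
    rwa [Q.part_eq_of_mem hC (hBC (P.nonempty_of_mem_parts hB).choose_spec)]
  have hinj := inj_on_of_surj_on_of_card_le f (fun B _ => Q.part_mem_parts _)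
    (fun C hC => by
      obtain ⟨B, hB, hBC⟩ := exists_le_of_le h hC
      exact ⟨B, hB, Q.part_eq_of_mem hC (hBC (P.nonempty_of_mem_parts hB).choose_spec)⟩)
    hc
  have hsub : P.parts ⊆ Q.parts := fun B hB => by
    suffices B = f B hB from this ▸ Q.part_mem_parts _
    refine (hfB B hB).antisymm fun x hx => ?_
    have hfx : f (P.part x) (P.part_mem_parts x) = f B hB :=
      (part_eq_part_of_mem (hfB _ (P.part_mem_parts x) (P.mem_part_univ x))).symm.trans
        (part_eq_part_of_mem hx)
    rw [← hinj (P.part_mem_parts x) hB hfx]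
    exact P.mem_part_univ x
  ext B
  rw [eq_of_subset_of_card_le hsub (card_mono h)]

lemma part_bind {Q : ∀ V ∈ P.parts, Finpartition V} {V : Finset α} (hV : V ∈ P.parts)
    {B : Finset α} (hB : B ∈ (Q V hV).parts) {x : α} (hx : x ∈ B) : (P.bind Q).part x = B :=
  (P.bind Q).part_eq_of_mem (mem_bind.2 ⟨V, hV, hB⟩) hx

end univ

def IsSaturated (P : Finpartition (univ : Finset α)) (s : Finset α) : Prop :=
  ∀ ⦃a⦄, a ∈ s → P.part a ⊆ s

namespace IsSaturated

variable {P Q : Finpartition (univ : Finset α)} {s t : Finset α}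

lemma mem_of_mem_part (hs : P.IsSaturated s) {a b : α} (hb : b ∈ s) (h : b ∈ P.part a) :
    a ∈ s :=
  hs hb (part_eq_part_of_mem h ▸ P.mem_part_univ a)

lemma union (hs : P.IsSaturated s) (ht : P.IsSaturated t) : P.IsSaturated (s ∪ t) := by
  intro a ha
  rcases mem_union.1 ha with h | h
  · exact (hs h).trans subset_union_left
  · exact (ht h).trans subset_union_right

lemma inter (hs : P.IsSaturated s) (ht : P.IsSaturated t) : P.IsSaturated (s ∩ t) :=
  fun _ ha => subset_inter (hs (mem_inter.1 ha).1) (ht (mem_inter.1 ha).2)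

lemma sdiff (hs : P.IsSaturated s) (ht : P.IsSaturated t) : P.IsSaturated (s \ t) := by
  intro a ha b hb
  obtain ⟨has, hat⟩ := mem_sdiff.1 ha
  exact mem_sdiff.2 ⟨hs has hb, fun hbt => hat (ht.mem_of_mem_part hbt hb)⟩

lemma symmDiff (hs : P.IsSaturated s) (ht : P.IsSaturated t) : P.IsSaturated (s ∆ t) := by
  rw [symmDiff_def]
  exact (hs.sdiff ht).union (ht.sdiff hs)

lemma of_le (h : P ≤ Q) (hs : Q.IsSaturated s) : P.IsSaturated s :=
  fun a ha => (part_subset_part_of_le h a).trans (hs ha)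

end IsSaturated

end Finpartition

lemma Finset.Iic_symmDiff_Iic_of_le {α : Type*} [LinearOrder α] [LocallyFiniteOrder α]
    [LocallyFiniteOrderBot α] {a b : α} (h : a ≤ b) : Iic a ∆ Iic b = Ioc a b := by
  ext x
  simp only [mem_symmDiff, mem_Iic, mem_Ioc]
  constructor
  · rintro (⟨hxa, hxb⟩ | ⟨hxb, hxa⟩)
    · exact absurd (hxa.trans h) hxb
    · exact ⟨lt_of_not_ge hxa, hxb⟩
  · rintro ⟨hax, hxb⟩
    exact Or.inr ⟨hxb, not_le.2 hax⟩

abbrev FinPartition (n : ℕ) : Type := Finpartition (univ : Finset (Fin n))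

open Finpartition

variable {n : ℕ}

lemma isNCFamily_iff {m : ℕ} (P : Finset (Finset (Fin m))) :
    IsNCFamily P ↔ ∀ (a b c d : Fin m) (B₁ B₂ : Finset (Fin m)),
      a < b → b < c → c < d → B₁ ∈ P → B₂ ∈ P → B₁ ≠ B₂ →
      a ∈ B₁ → c ∈ B₁ → b ∈ B₂ → d ∈ B₂ → False := by
  simp only [IsNCFamily, not_exists, not_and]

lemma isNoncrossing_bot : IsNoncrossing (⊥ : FinPartition n) := by
  rw [IsNoncrossing, isNCFamily_iff]
  intro a b c d B₁ B₂ hab hbc _ hB₁ _ _ ha hc _ _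
  obtain ⟨x, -, rfl⟩ := mem_bot_iff.1 hB₁
  rw [mem_singleton] at ha hc
  exact (hab.trans hbc).ne (ha.trans hc.symm)

lemma isNoncrossing_top : IsNoncrossing (⊤ : FinPartition n) := by
  rw [IsNoncrossing, isNCFamily_iff]
  intro a b c d B₁ B₂ _ _ _ hB₁ hB₂ hne _ _ _ _
  exact hne ((mem_singleton.1 (parts_top_subset _ hB₁)).trans
    (mem_singleton.1 (parts_top_subset _ hB₂)).symm)

/-- `b ∼ d` iff the interval `(min b d, max b d] = Iic b ∆ Iic d` is a union of blocks of `π`;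
in the symmetric-difference form, transitivity is the closure of saturated sets under `∆`. -/
def KrewerasRel (π : FinPartition n) (b d : Fin n) : Prop :=
  π.IsSaturated (Iic b ∆ Iic d)

namespace KrewerasRel

variable {π σ : FinPartition n} {b d e : Fin n}

lemma iff_of_le (h : b ≤ d) : KrewerasRel π b d ↔ π.IsSaturated (Ioc b d) := by
  rw [KrewerasRel, Iic_symmDiff_Iic_of_le h]

lemma refl (π : FinPartition n) (b : Fin n) : KrewerasRel π b b := by
  simp [KrewerasRel, IsSaturated]

lemma symm (h : KrewerasRel π b d) : KrewerasRel π d b := by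
  rwa [KrewerasRel, symmDiff_comm]

lemma comm : KrewerasRel π b d ↔ KrewerasRel π d b := ⟨symm, symm⟩

lemma trans (h₁ : KrewerasRel π b d) (h₂ : KrewerasRel π d e) : KrewerasRel π b e := by
  have := IsSaturated.symmDiff h₁ h₂
  rwa [symmDiff_assoc, symmDiff_symmDiff_cancel_left] at this

lemma of_le (hσπ : σ ≤ π) (h : KrewerasRel π b d) : KrewerasRel σ b d :=
  IsSaturated.of_le hσπ h

end KrewerasRel

def krewerasSetoid (π : FinPartition n) : Setoid (Fin n) :=
  ⟨KrewerasRel π, ⟨KrewerasRel.refl π, KrewerasRel.symm, KrewerasRel.trans⟩⟩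

open Classical in
noncomputable def krewerasCompl (π : FinPartition n) : FinPartition n :=
  Finpartition.ofSetoid (krewerasSetoid π)

section krewerasCompl

variable {π σ : FinPartition n}

lemma mem_part_krewerasCompl {x y : Fin n} :
    y ∈ (krewerasCompl π).part x ↔ KrewerasRel π x y := by
  classical
  exact mem_part_ofSetoid_iff_rel

lemma krewerasRel_of_mem_parts {B : Finset (Fin n)} (hB : B ∈ (krewerasCompl π).parts)
    {x y : Fin n} (hx : x ∈ B) (hy : y ∈ B) : KrewerasRel π x y := by
  rw [← mem_part_krewerasCompl, (krewerasCompl π).part_eq_of_mem hB hx]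
  exact hy

lemma isNoncrossing_krewerasCompl (π : FinPartition n) : IsNoncrossing (krewerasCompl π) := by
  rw [IsNoncrossing, isNCFamily_iff]
  intro a b c d B₁ B₂ hab hbc hcd hB₁ hB₂ hne ha hc hb hd
  have hac := (KrewerasRel.iff_of_le (hab.trans hbc).le).1 (krewerasRel_of_mem_parts hB₁ ha hc)
  have hbd := (KrewerasRel.iff_of_le (hbc.trans hcd).le).1 (krewerasRel_of_mem_parts hB₂ hb hd)
  -- `(b, c]` is the intersection of `(a, c]` and `(b, d]`
  have hbc' : KrewerasRel π b c := by
    rw [KrewerasRel.iff_of_le hbc.le]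
    convert hac.inter hbd using 1
    ext x
    simp only [mem_Ioc, mem_inter]
    constructor
    · rintro ⟨hbx, hxc⟩
      exact ⟨⟨hab.trans hbx, hxc⟩, hbx, hxc.trans hcd.le⟩
    · rintro ⟨⟨-, hxc⟩, hbx, -⟩
      exact ⟨hbx, hxc⟩
  refine hne (((krewerasCompl π).part_eq_of_mem hB₁ hc).symm.trans ?_)
  rw [← (krewerasCompl π).part_eq_of_mem hB₂ hb]
  exact part_eq_part_of_mem (mem_part_krewerasCompl.2 hbc')

end krewerasCompl

section interleaving

variable {i j : Fin n}

lemma evenEmb_lt_evenEmb : evenEmb i < evenEmb j ↔ i < j := by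
  simp only [evenEmb, Fin.lt_def]; omega

lemma oddEmb_lt_oddEmb : oddEmb i < oddEmb j ↔ i < j := by
  simp only [oddEmb, Fin.lt_def]; omega

lemma evenEmb_lt_oddEmb : evenEmb i < oddEmb j ↔ i ≤ j := by
  simp only [evenEmb, oddEmb, Fin.lt_def, Fin.le_def]; omega

lemma oddEmb_lt_evenEmb : oddEmb i < evenEmb j ↔ i < j := by
  simp only [evenEmb, oddEmb, Fin.lt_def]; omega

lemma image_evenEmb_ne_image_oddEmb {B W : Finset (Fin n)} (hB : B.Nonempty) :
    B.image evenEmb ≠ W.image oddEmb := by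
  intro h
  obtain ⟨i, hi⟩ := hB
  obtain ⟨j, -, hj⟩ := mem_image.1 (h ▸ mem_image_of_mem evenEmb hi)
  simp only [evenEmb, oddEmb, Fin.mk.injEq] at hj
  omega

end interleaving

section krewCompat

variable {π σ : FinPartition n}

lemma KrewCompat.isSaturated_Ioc (h : KrewCompat π σ) {W : Finset (Fin n)} (hW : W ∈ σ.parts)
    {b d : Fin n} (hb : b ∈ W) (hd : d ∈ W) : π.IsSaturated (Ioc b d) := by
  have hc := (isNCFamily_iff _).1 h
  intro x hx w hw
  by_contra hwIoc
  rw [mem_Ioc] at hx hwIoc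
  have hP := mem_union_left (σ.parts.image fun B => B.image oddEmb)
    (mem_image_of_mem (fun B => B.image evenEmb) (π.part_mem_parts x))
  have hW' := mem_union_right (π.parts.image fun B => B.image evenEmb)
    (mem_image_of_mem (fun B => B.image oddEmb) hW)
  have hne := image_evenEmb_ne_image_oddEmb (W := W) ⟨x, π.mem_part_univ x⟩
  rcases le_or_gt w b with hwb | hbw
  · exact hc (evenEmb w) (oddEmb b) (evenEmb x) (oddEmb d) _ _
      (evenEmb_lt_oddEmb.2 hwb) (oddEmb_lt_evenEmb.2 hx.1) (evenEmb_lt_oddEmb.2 hx.2)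
      hP hW' hne (mem_image_of_mem _ hw) (mem_image_of_mem _ (π.mem_part_univ x))
      (mem_image_of_mem _ hb) (mem_image_of_mem _ hd)
  · exact hc (oddEmb b) (evenEmb x) (oddEmb d) (evenEmb w) _ _
      (oddEmb_lt_evenEmb.2 hx.1) (evenEmb_lt_oddEmb.2 hx.2)
      (oddEmb_lt_evenEmb.2 (lt_of_not_ge fun hwd => hwIoc ⟨hbw, hwd⟩))
      hW' hP hne.symm (mem_image_of_mem _ hb) (mem_image_of_mem _ hd)
      (mem_image_of_mem _ (π.mem_part_univ x)) (mem_image_of_mem _ hw)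

lemma KrewCompat.krewerasRel (h : KrewCompat π σ) {W : Finset (Fin n)} (hW : W ∈ σ.parts)
    {b d : Fin n} (hb : b ∈ W) (hd : d ∈ W) : KrewerasRel π b d := by
  rcases le_total b d with hbd | hdb
  · exact (KrewerasRel.iff_of_le hbd).2 (h.isSaturated_Ioc hW hb hd)
  · exact ((KrewerasRel.iff_of_le hdb).2 (h.isSaturated_Ioc hW hd hb)).symm

lemma krewCompat_of_krewerasRel (hπ : IsNoncrossing π) (hσ : IsNoncrossing σ)
    (hrel : ∀ W ∈ σ.parts, ∀ b ∈ W, ∀ d ∈ W, KrewerasRel π b d) : KrewCompat π σ := by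
  rw [IsNoncrossing, isNCFamily_iff] at hπ hσ
  -- a block of `π` crossing a block `W` of `σ` would be cut by a saturated interval of `W`
  have mixed : ∀ {P W : Finset (Fin n)} {i j b d : Fin n}, P ∈ π.parts → W ∈ σ.parts →
      i ∈ P → j ∈ P → b ∈ W → d ∈ W → b < i → i ≤ d → j ≤ b ∨ d < j → False := by
    intro P W i j b d hP hW hi hj hb hd hbi hid hj'
    have hsat := (KrewerasRel.iff_of_le (hbi.le.trans hid)).1 (hrel W hW b hb d hd)
    have hjIoc := mem_Ioc.1 (hsat (mem_Ioc.2 ⟨hbi, hid⟩) (π.part_eq_of_mem hP hi ▸ hj))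
    rcases hj' with hjb | hdj
    exacts [absurd hjIoc.1 (not_lt.2 hjb), absurd hjIoc.2 (not_le.2 hdj)]
  rw [KrewCompat, isNCFamily_iff]
  intro a b c d B₁ B₂ hab hbc hcd hB₁ hB₂ hne ha hc hb hd
  rcases mem_union.1 hB₁ with h₁ | h₁ <;> rcases mem_union.1 hB₂ with h₂ | h₂ <;>
    obtain ⟨X, hX, rfl⟩ := mem_image.1 h₁ <;> obtain ⟨Y, hY, rfl⟩ := mem_image.1 h₂ <;>
    obtain ⟨i, hi, rfl⟩ := mem_image.1 ha <;> obtain ⟨j, hj, rfl⟩ := mem_image.1 hb <;>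
    obtain ⟨k, hk, rfl⟩ := mem_image.1 hc <;> obtain ⟨l, hl, rfl⟩ := mem_image.1 hd
  · exact hπ i j k l X Y (evenEmb_lt_evenEmb.1 hab) (evenEmb_lt_evenEmb.1 hbc)
      (evenEmb_lt_evenEmb.1 hcd) hX hY (fun h => hne (h ▸ rfl)) hi hk hj hl
  · exact mixed hX hY hk hi hj hl (oddEmb_lt_evenEmb.1 hbc) (evenEmb_lt_oddEmb.1 hcd)
      (Or.inl (evenEmb_lt_oddEmb.1 hab))
  · exact mixed hY hX hj hl hi hk (oddEmb_lt_evenEmb.1 hab) (evenEmb_lt_oddEmb.1 hbc)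
      (Or.inr (oddEmb_lt_evenEmb.1 hcd))
  · exact hσ i j k l X Y (oddEmb_lt_oddEmb.1 hab) (oddEmb_lt_oddEmb.1 hbc)
      (oddEmb_lt_oddEmb.1 hcd) hX hY (fun h => hne (h ▸ rfl)) hi hk hj hl

lemma krewCompat_krewerasCompl (hπ : IsNoncrossing π) : KrewCompat π (krewerasCompl π) :=
  krewCompat_of_krewerasRel hπ (isNoncrossing_krewerasCompl π)
    fun _ hW _ hb _ hd => krewerasRel_of_mem_parts hW hb hd

lemma KrewCompat.le_krewerasCompl (h : KrewCompat π σ) : σ ≤ krewerasCompl π := by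
  intro W hW
  obtain ⟨b, hb⟩ := σ.nonempty_of_mem_parts hW
  exact ⟨(krewerasCompl π).part b, (krewerasCompl π).part_mem_parts b,
    fun d hd => mem_part_krewerasCompl.2 (h.krewerasRel hW hb hd)⟩

lemma krewCompat_iff_le_krewerasCompl (hπ : IsNoncrossing π) (hσ : IsNoncrossing σ) :
    KrewCompat π σ ↔ σ ≤ krewerasCompl π := by
  refine ⟨KrewCompat.le_krewerasCompl, fun h => krewCompat_of_krewerasRel hπ hσ ?_⟩
  intro W hW b hb d hd
  obtain ⟨C, hC, hWC⟩ := h hW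
  exact krewerasRel_of_mem_parts hC (hWC hb) (hWC hd)

end krewCompat

lemma kreweras_val (π : NCPart n) : (kreweras π).1 = krewerasCompl π.1 := by
  have hK : IsGreatest {σ : NCPart n | KrewCompat π.1 σ.1}
      ⟨krewerasCompl π.1, isNoncrossing_krewerasCompl π.1⟩ :=
    ⟨krewCompat_krewerasCompl π.2, fun _ hσ => KrewCompat.le_krewerasCompl hσ⟩
  have hex : ∃ σ : NCPart n, IsGreatest {σ : NCPart n | KrewCompat π.1 σ.1} σ := ⟨_, hK⟩
  rw [kreweras, dif_pos hex, hex.choose_spec.unique hK]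

lemma krewerasCompl_bot : krewerasCompl (⊥ : FinPartition n) = ⊤ := by
  refine ext_part fun x => ?_
  ext y
  simp [mem_part_krewerasCompl, part_top, KrewerasRel, IsSaturated, part_bot]

lemma krewerasRel_top_iff {b d : Fin n} : KrewerasRel ⊤ b d ↔ b = d := by
  refine ⟨fun h => ?_, fun h => h ▸ .refl _ _⟩
  by_contra hbd
  have hmax : max b d ∈ Iic b ∆ Iic d := by
    rcases lt_or_gt_of_ne hbd with h | h <;> simp [mem_symmDiff, h.le, h]
  have hmin := h hmax (by rw [part_top]; exact mem_univ (min b d))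
  simp [mem_symmDiff] at hmin

lemma krewerasCompl_top : krewerasCompl (⊤ : FinPartition n) = ⊥ := by
  refine ext_part fun x => ?_
  ext y
  rw [mem_part_krewerasCompl, krewerasRel_top_iff, part_bot, mem_singleton, eq_comm]

lemma exists_gt_mem_part_krewerasCompl_iff {k : ℕ} {π : FinPartition (k + 1)} (hπ : IsNoncrossing π)
    (i : Fin k) :
    (∃ e ∈ (krewerasCompl π).part i.castSucc, i.castSucc < e) ↔
      ∀ y ∈ π.part i.succ, i.succ ≤ y := by
  constructor
  · rintro ⟨e, he, hie⟩ y hy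
    have hsat := (KrewerasRel.iff_of_le hie.le).1 (mem_part_krewerasCompl.1 he)
    have hmem : i.succ ∈ Ioc i.castSucc e :=
      mem_Ioc.2 ⟨Fin.castSucc_lt_succ, Fin.castSucc_lt_iff_succ_le.1 hie⟩
    exact Fin.castSucc_lt_iff_succ_le.1 (mem_Ioc.1 (hsat hmem hy)).1
  · intro hmin
    set B := π.part i.succ
    have hB : B ∈ π.parts := π.part_mem_parts _
    have hne : B.Nonempty := ⟨_, π.mem_part_univ _⟩
    set e := B.max' hne
    have heB : e ∈ B := B.max'_mem hne
    have hie : i.castSucc < e := Fin.castSucc_lt_succ.trans_le (B.le_max' _ (π.mem_part_univ _))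
    refine ⟨e, mem_part_krewerasCompl.2 ((KrewerasRel.iff_of_le hie.le).2 fun x hx w hw => ?_),
      hie⟩
    rw [mem_Ioc] at hx ⊢
    rcases eq_or_ne (π.part x) B with hxB | hxB
    · rw [hxB] at hw
      exact ⟨Fin.castSucc_lt_succ.trans_le (hmin w hw), B.le_max' w hw⟩
    -- otherwise `i + 1 < x < e`, and a block of `x` leaving `(i, e]` would cross `B`
    have hxB' : x ∉ B := fun h => hxB (π.part_eq_of_mem hB h)
    have hsx : i.succ < x := lt_of_le_of_ne (Fin.castSucc_lt_iff_succ_le.1 hx.1)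
      fun h => hxB' (h ▸ π.mem_part_univ _)
    have hxe : x < e := lt_of_le_of_ne hx.2 fun h => hxB' (h ▸ heB)
    have hNC := (isNCFamily_iff _).1 hπ
    by_contra hw'
    rcases le_or_gt w i.castSucc with hwi | hiw
    · exact hNC w i.succ x e _ B (hwi.trans_lt Fin.castSucc_lt_succ) hsx hxe
        (π.part_mem_parts x) hB hxB hw (π.mem_part_univ x) (π.mem_part_univ _) heB
    · exact hNC i.succ x e w B _ hsx hxe (lt_of_not_ge fun hwe => hw' ⟨hiw, hwe⟩) hB
        (π.part_mem_parts x) (Ne.symm hxB) (π.mem_part_univ _) heB (π.mem_part_univ x) hw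

/-- Count the maxima of the classes of `K(π)` and the minima of the blocks of `π`: by
`exists_gt_mem_part_krewerasCompl_iff`, `i` is not a maximum iff `i + 1` is a minimum. -/
lemma card_parts_add_card_parts_krewerasCompl [NeZero n] {π : FinPartition n}
    (hπ : IsNoncrossing π) : #π.parts + #(krewerasCompl π).parts = n + 1 := by
  obtain ⟨k, rfl⟩ := Nat.exists_eq_add_one_of_ne_zero (NeZero.ne n)
  set K := krewerasCompl π
  have hsplit : #K.parts + #{d | ¬∀ y ∈ K.part d, y ≤ d} = k + 1 := by
    rw [K.card_parts_eq_card_filter_max]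
    exact (card_filter_add_card_filter_not _).trans (card_fin _)
  -- the last point is maximal in its class, so non-maximal points are `castSucc`s
  have hnonmax : #{d | ¬∀ y ∈ K.part d, y ≤ d} =
      #{i : Fin k | ∀ y ∈ π.part i.succ, i.succ ≤ y} := by
    have himage : ({d | ¬∀ y ∈ K.part d, y ≤ d} : Finset (Fin (k + 1))) =
        ({i | ¬∀ y ∈ K.part i.castSucc, y ≤ i.castSucc} : Finset (Fin k)).image Fin.castSucc := by
      ext d
      induction d using Fin.lastCases with
      | last => simp [Fin.le_last]
      | cast i => simp
    rw [himage, card_image_of_injective _ (Fin.castSucc_injective k)]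
    refine congrArg card (filter_congr fun i _ => ?_)
    simp only [not_forall, not_le, exists_prop, ← exists_gt_mem_part_krewerasCompl_iff hπ, K]
  have hmin := π.card_parts_eq_card_filter_min
  rw [Fin.card_filter_univ_succ, if_pos fun y _ => Fin.zero_le y] at hmin
  omega

section reversal

def finsetRevOrderIso : Finset (Fin n) ≃o Finset (Fin n) where
  toEquiv := Fin.revPerm.finsetCongr
  map_rel_iff' := map_subset_map

lemma finsetRevOrderIso_apply (s : Finset (Fin n)) : finsetRevOrderIso s = s.image Fin.rev := by
  show Fin.revPerm.finsetCongr s = _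
  rw [Equiv.finsetCongr_apply, map_eq_image]
  rfl

noncomputable def revPart (π : FinPartition n) : FinPartition n :=
  (π.map finsetRevOrderIso).copy (by
    rw [finsetRevOrderIso_apply]
    exact image_univ_of_surjective Fin.rev_surjective)

lemma mem_image_rev {B : Finset (Fin n)} {x : Fin n} : x ∈ B.image Fin.rev ↔ x.rev ∈ B := by
  rw [mem_image]
  exact ⟨fun ⟨y, hy, hyx⟩ => hyx ▸ (Fin.rev_rev y).symm ▸ hy, fun h => ⟨x.rev, h, Fin.rev_rev x⟩⟩

lemma image_rev_image_rev (B : Finset (Fin n)) : (B.image Fin.rev).image Fin.rev = B := by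
  ext x
  rw [mem_image_rev, mem_image_rev, Fin.rev_rev]

lemma image_rev_injective : Function.Injective fun B : Finset (Fin n) => B.image Fin.rev :=
  Function.LeftInverse.injective image_rev_image_rev

lemma card_image_rev (B : Finset (Fin n)) : #(B.image Fin.rev) = #B :=
  card_image_of_injective _ Fin.rev_injective

variable {π ρ σ : FinPartition n}

lemma parts_revPart (π : FinPartition n) :
    (revPart π).parts = π.parts.image fun B => B.image Fin.rev := by
  rw [revPart, copy_parts, parts_map, map_eq_image]
  exact image_congr fun B _ => finsetRevOrderIso_apply B

lemma revPart_revPart (π : FinPartition n) : revPart (revPart π) = π := by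
  ext B
  rw [parts_revPart, parts_revPart, image_image]
  simp only [Function.comp_def, image_rev_image_rev, image_id']

lemma card_parts_revPart (π : FinPartition n) : #(revPart π).parts = #π.parts := by
  rw [parts_revPart, card_image_of_injective _ image_rev_injective]

lemma prod_parts_revPart {M : Type*} [CommMonoid M] (π : FinPartition n) (f : ℕ → M) :
    ∏ B ∈ (revPart π).parts, f #B = ∏ B ∈ π.parts, f #B := by
  rw [parts_revPart, prod_image image_rev_injective.injOn]
  simp only [card_image_rev]

lemma revPart_mono (h : π ≤ ρ) : revPart π ≤ revPart ρ := by
  intro B hB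
  rw [parts_revPart] at hB
  obtain ⟨C, hC, rfl⟩ := mem_image.1 hB
  obtain ⟨D, hD, hCD⟩ := h hC
  exact ⟨D.image Fin.rev, parts_revPart ρ ▸ mem_image_of_mem _ hD, image_subset_image hCD⟩

lemma revPart_le_revPart_iff : revPart π ≤ revPart ρ ↔ π ≤ ρ :=
  ⟨fun h => revPart_revPart π ▸ revPart_revPart ρ ▸ revPart_mono h, revPart_mono⟩

lemma IsNCFamily.image_rev {m : ℕ} {P : Finset (Finset (Fin m))} (h : IsNCFamily P) :
    IsNCFamily (P.image fun B => B.image Fin.rev) := by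
  rw [isNCFamily_iff] at h ⊢
  intro a b c d B₁ B₂ hab hbc hcd hB₁ hB₂ hne ha hc hb hd
  obtain ⟨C₁, hC₁, rfl⟩ := mem_image.1 hB₁
  obtain ⟨C₂, hC₂, rfl⟩ := mem_image.1 hB₂
  rw [mem_image_rev] at ha hb hc hd
  exact h d.rev c.rev b.rev a.rev C₂ C₁ (Fin.rev_lt_rev.2 hcd) (Fin.rev_lt_rev.2 hbc)
    (Fin.rev_lt_rev.2 hab) hC₂ hC₁ (fun h => hne (h ▸ rfl)) hd hb hc ha

lemma IsNoncrossing.rev (h : IsNoncrossing π) : IsNoncrossing (revPart π) := by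
  rw [IsNoncrossing, parts_revPart]
  exact IsNCFamily.image_rev h

lemma rev_evenEmb (i : Fin n) : (evenEmb i).rev = oddEmb i.rev := by
  simp only [evenEmb, oddEmb, Fin.rev, Fin.mk.injEq]
  omega

lemma rev_oddEmb (i : Fin n) : (oddEmb i).rev = evenEmb i.rev := by
  simp only [evenEmb, oddEmb, Fin.rev, Fin.mk.injEq]
  omega

lemma KrewCompat.rev (h : KrewCompat π σ) : KrewCompat (revPart σ) (revPart π) := by
  have key : ((revPart σ).parts.image fun B => B.image evenEmb) ∪
      ((revPart π).parts.image fun B => B.image oddEmb) =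
      ((π.parts.image fun B => B.image evenEmb) ∪ (σ.parts.image fun B => B.image oddEmb)).image
        fun B => B.image Fin.rev := by
    simp only [parts_revPart, image_union, image_image, Function.comp_def, rev_evenEmb,
      rev_oddEmb]
    exact union_comm _ _
  rw [KrewCompat, key]
  exact IsNCFamily.image_rev h

end reversal

namespace NCPart

noncomputable instance : Fintype (NCPart n) := Fintype.ofFinite _

noncomputable def rev (π : NCPart n) : NCPart n := ⟨revPart π.1, π.2.rev⟩

variable {π ρ σ : NCPart n}

@[simp]
lemma rev_val (π : NCPart n) : π.rev.1 = revPart π.1 := rfl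

lemma rev_rev (π : NCPart n) : π.rev.rev = π := Subtype.ext (revPart_revPart π.1)

lemma rev_le_rev_iff : π.rev ≤ ρ.rev ↔ π ≤ ρ := revPart_le_revPart_iff

lemma card_parts_rev (π : NCPart n) : #π.rev.1.parts = #π.1.parts := card_parts_revPart π.1

lemma le_kreweras_iff : σ ≤ kreweras π ↔ KrewCompat π.1 σ.1 := by
  show σ.1 ≤ (kreweras π).1 ↔ _
  rw [kreweras_val, krewCompat_iff_le_krewerasCompl π.2 σ.2]

lemma le_kreweras_iff_le_rev_kreweras_rev : σ ≤ kreweras π ↔ π ≤ (kreweras σ.rev).rev := by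
  rw [le_kreweras_iff, ← rev_le_rev_iff, rev_rev, le_kreweras_iff]
  refine ⟨KrewCompat.rev, fun h => ?_⟩
  simpa only [rev_val, revPart_revPart] using h.rev

lemma card_parts_add_card_parts_kreweras [NeZero n] (π : NCPart n) :
    #π.1.parts + #(kreweras π).1.parts = n + 1 := by
  rw [kreweras_val]
  exact card_parts_add_card_parts_krewerasCompl π.2

/-- `K(K(π)‾)‾` lies above `π` by compatibility of `π` with `K(π)`, and has the same rank. -/
lemma rev_kreweras_rev_kreweras [NeZero n] (π : NCPart n) :
    (kreweras (kreweras π).rev).rev = π := by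
  have hle : π ≤ (kreweras (kreweras π).rev).rev := le_kreweras_iff_le_rev_kreweras_rev.1 le_rfl
  have h₁ := card_parts_add_card_parts_kreweras π
  have h₂ := card_parts_add_card_parts_kreweras (kreweras π).rev
  rw [card_parts_rev] at h₂
  refine (Subtype.ext (eq_of_le_of_card_parts_le hle ?_)).symm
  rw [card_parts_rev]
  omega

lemma kreweras_injective [NeZero n] : Function.Injective (kreweras (n := n)) := fun π ρ h => by
  rw [← rev_kreweras_rev_kreweras π, h, rev_kreweras_rev_kreweras]

lemma kreweras_rev_kreweras_rev [NeZero n] (σ : NCPart n) :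
    kreweras (kreweras σ.rev).rev = σ := by
  obtain ⟨π, rfl⟩ := Finite.surjective_of_injective kreweras_injective σ
  rw [rev_kreweras_rev_kreweras]

def bot : NCPart n := ⟨⊥, isNoncrossing_bot⟩

def top : NCPart n := ⟨⊤, isNoncrossing_top⟩

lemma kreweras_bot : kreweras (bot : NCPart n) = top :=
  Subtype.ext ((kreweras_val _).trans krewerasCompl_bot)

lemma kreweras_top : kreweras (top : NCPart n) = bot :=
  Subtype.ext ((kreweras_val _).trans krewerasCompl_top)

noncomputable def revEquiv : NCPart n ≃ NCPart n := ⟨rev, rev, rev_rev, rev_rev⟩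

@[simp]
lemma revEquiv_apply (π : NCPart n) : revEquiv π = π.rev := rfl

noncomputable def krewerasEquiv [NeZero n] : NCPart n ≃ NCPart n where
  toFun := kreweras
  invFun σ := (kreweras σ.rev).rev
  left_inv := rev_kreweras_rev_kreweras
  right_inv := kreweras_rev_kreweras_rev

@[simp]
lemma krewerasEquiv_apply [NeZero n] (π : NCPart n) : krewerasEquiv π = kreweras π := rfl

lemma card_lt_of_mem_parts_kreweras [NeZero n] {π : NCPart n} (hπ : π ≠ bot)
    {W : Finset (Fin n)} (hW : W ∈ (kreweras π).1.parts) : #W < n := by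
  refine (card_le_univ W).trans_eq (card_fin n) |>.lt_of_ne fun hWn => hπ ?_
  have hWuniv : W = univ := eq_univ_of_card W (hWn.trans (card_fin n).symm)
  refine kreweras_injective ((Subtype.ext ?_).trans kreweras_bot.symm)
  exact eq_top_of_univ_mem_parts (hWuniv ▸ hW)

end NCPart

open PowerSeries

noncomputable def coeffProd {α : Type*} [DecidableEq α] {s : Finset α} (f : PowerSeries R)
    (P : Finpartition s) : R :=
  ∏ B ∈ P.parts, coeff #B f

section coeffProd

variable {α : Type*} [DecidableEq α] {s : Finset α}

lemma coeffProd_bot (f : PowerSeries R) :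
    coeffProd f (⊥ : Finpartition s) = coeff 1 f ^ #s := by
  rw [coeffProd, parts_bot, prod_map]
  simp

lemma coeffProd_bind (f : PowerSeries R) (P : Finpartition s)
    (Q : ∀ V ∈ P.parts, Finpartition V) :
    coeffProd f (P.bind Q) = ∏ V ∈ P.parts.attach, coeffProd f (Q V.1 V.2) :=
  prod_bind_parts P Q _

lemma coeffProd_top_univ [NeZero n] (f : PowerSeries R) :
    coeffProd f (⊤ : FinPartition n) = coeff n f := by
  rw [coeffProd, parts_top_univ, prod_singleton, card_univ, Fintype.card_fin]

lemma coeffProd_X_of_ne_bot [Fintype α] {P : Finpartition (univ : Finset α)} (hP : P ≠ ⊥) :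
    coeffProd (X : PowerSeries R) P = 0 := by
  obtain ⟨B, hB, hBc⟩ : ∃ B ∈ P.parts, #B ≠ 1 := by
    by_contra! h
    exact hP (eq_bot_of_forall_card_eq_one h)
  exact prod_eq_zero hB (by rw [coeff_X, if_neg hBc])

lemma coeffProd_revPart (f : PowerSeries R) (π : FinPartition n) :
    coeffProd f (revPart π) = coeffProd f π :=
  prod_parts_revPart π fun k => coeff k f

end coeffProd

lemma coeff_boxConv (f g : PowerSeries R) {m : ℕ} (hm : m ≠ 0) :
    coeff m (boxConv f g) = ∑ π : NCPart m, coeffProd f π.1 * coeffProd g (kreweras π).1 := by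
  rw [boxConv, coeff_mk, if_neg hm, finsum_eq_sum_of_fintype]
  rfl

lemma constantCoeff_boxConv (f g : PowerSeries R) : constantCoeff (boxConv f g) = 0 := by
  rw [← coeff_zero_eq_constantCoeff_apply, boxConv, coeff_mk, if_pos rfl]

lemma eq_bot_of_finPartition_one (π : FinPartition 1) : π = ⊥ :=
  eq_bot_of_forall_card_eq_one fun B hB =>
    le_antisymm ((card_le_univ B).trans_eq (Fintype.card_fin 1))
      (card_pos.2 (π.nonempty_of_mem_parts hB))

lemma coeff_one_boxConv (f g : PowerSeries R) :
    coeff 1 (boxConv f g) = coeff 1 f * coeff 1 g := by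
  rw [coeff_boxConv f g one_ne_zero, Fintype.sum_eq_single NCPart.bot fun π hπ =>
    absurd (Subtype.ext (eq_bot_of_finPartition_one π.1)) hπ,
    eq_bot_of_finPartition_one (kreweras _).1]
  simp [NCPart.bot, coeffProd_bot]

lemma memG1_X : memG1 (X : PowerSeries R) := by
  simp [memG1]

lemma memG1_boxConv {f g : PowerSeries R} (hf : memG1 f) (hg : memG1 g) :
    memG1 (boxConv f g) :=
  ⟨constantCoeff_boxConv f g, coeff_one_boxConv f g ▸ hf.2.mul hg.2⟩

lemma boxConv_X_left {f : PowerSeries R} (hf : constantCoeff f = 0) : boxConv X f = f := by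
  ext m
  rcases eq_or_ne m 0 with rfl | hm
  · simp only [coeff_zero_eq_constantCoeff_apply, constantCoeff_boxConv, hf]
  have : NeZero m := ⟨hm⟩
  rw [coeff_boxConv _ _ hm, Fintype.sum_eq_single NCPart.bot fun π hπ => by
    rw [coeffProd_X_of_ne_bot fun h => hπ (Subtype.ext h), zero_mul]]
  rw [NCPart.kreweras_bot, NCPart.bot, NCPart.top, coeffProd_bot, coeffProd_top_univ]
  simp

lemma boxConv_X_right {f : PowerSeries R} (hf : constantCoeff f = 0) : boxConv f X = f := by
  ext m
  rcases eq_or_ne m 0 with rfl | hm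
  · simp only [coeff_zero_eq_constantCoeff_apply, constantCoeff_boxConv, hf]
  have : NeZero m := ⟨hm⟩
  rw [coeff_boxConv _ _ hm, Fintype.sum_eq_single NCPart.top fun π hπ => by
    rw [coeffProd_X_of_ne_bot fun h => hπ (NCPart.kreweras_injective
      ((Subtype.ext h).trans NCPart.kreweras_top.symm)), mul_zero]]
  rw [NCPart.kreweras_top, NCPart.bot, NCPart.top, coeffProd_bot, coeffProd_top_univ]
  simp

/-- Reindex by `π = K⁻¹(σ) = K(σ̄)̄`, then by `σ ↦ σ̄`; reversal preserves block sizes. -/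
lemma boxConv_comm (f g : PowerSeries R) : boxConv f g = boxConv g f := by
  ext m
  rcases eq_or_ne m 0 with rfl | hm
  · simp only [coeff_zero_eq_constantCoeff_apply, constantCoeff_boxConv]
  have : NeZero m := ⟨hm⟩
  rw [coeff_boxConv f g hm, coeff_boxConv g f hm]
  calc ∑ π : NCPart m, coeffProd f π.1 * coeffProd g (kreweras π).1
      = ∑ σ : NCPart m, coeffProd f (kreweras σ.rev).1 * coeffProd g σ.1 :=
        Fintype.sum_equiv NCPart.krewerasEquiv _ _ fun π => by
          rw [NCPart.krewerasEquiv_apply, ← coeffProd_revPart f (kreweras _).1,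
            ← NCPart.rev_val, NCPart.rev_kreweras_rev_kreweras]
    _ = ∑ τ : NCPart m, coeffProd g τ.1 * coeffProd f (kreweras τ).1 :=
        Fintype.sum_equiv NCPart.revEquiv _ _ fun σ => by
          rw [NCPart.revEquiv_apply, mul_comm, ← coeffProd_revPart g σ.1,
            ← NCPart.rev_val]

open Classical in
lemma coeff_boxConv_eq_add (f g : PowerSeries R) {m : ℕ} (hm : m ≠ 0) :
    coeff m (boxConv f g) = coeff 1 f ^ m * coeff m g +
      ∑ π ∈ ({NCPart.bot}ᶜ : Finset (NCPart m)), coeffProd f π.1 * coeffProd g (kreweras π).1 := by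
  have : NeZero m := ⟨hm⟩
  rw [coeff_boxConv f g hm, Fintype.sum_eq_add_sum_compl NCPart.bot, NCPart.kreweras_bot,
    NCPart.bot, NCPart.top, coeffProd_bot, coeffProd_top_univ, card_univ, Fintype.card_fin]

open Classical in
/-- The coefficients of the right inverse of `f` under `⊠`, given `w = f₁⁻¹`: the `m`-th one
solves `coeff m (f ⊠ g) = 0` for `g_m`, all other terms involving only the `g_k` with `k < m`. -/
noncomputable def boxInvCoeff (f : PowerSeries R) (w : R) : ℕ → R
  | 0 => 0
  | 1 => w
  | m + 2 => -w ^ (m + 2) * ∑ π ∈ ({NCPart.bot}ᶜ : Finset (NCPart (m + 2))).attach,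
      coeffProd f π.1.1 * ∏ W ∈ (kreweras π.1).1.parts.attach, boxInvCoeff f w #W.1
  termination_by m => m
  decreasing_by
    exact NCPart.card_lt_of_mem_parts_kreweras (fun h => mem_compl.1 π.2 (mem_singleton.2 h)) W.2

noncomputable def boxInv (f : PowerSeries R) (w : R) : PowerSeries R :=
  mk (boxInvCoeff f w)

open Classical in
lemma coeff_boxInv_add_two (f : PowerSeries R) (w : R) (m : ℕ) :
    coeff (m + 2) (boxInv f w) = -w ^ (m + 2) *
      ∑ π ∈ ({NCPart.bot}ᶜ : Finset (NCPart (m + 2))),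
        coeffProd f π.1 * coeffProd (boxInv f w) (kreweras π).1 := by
  rw [boxInv, coeff_mk, boxInvCoeff, ← sum_attach ({NCPart.bot}ᶜ : Finset (NCPart (m + 2)))]
  simp only [coeffProd, coeff_mk, prod_attach (f := fun W => boxInvCoeff f w #W)]

lemma memG1_boxInv (f : PowerSeries R) {w : R} (hw : IsUnit w) : memG1 (boxInv f w) := by
  simp [memG1, boxInv, ← coeff_zero_eq_constantCoeff_apply, boxInvCoeff, hw]

lemma boxConv_boxInv {f : PowerSeries R} {w : R} (hw : coeff 1 f * w = 1) :
    boxConv f (boxInv f w) = X := by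
  ext m
  rcases m with _ | _ | m
  · simp [constantCoeff_boxConv]
  · simp [coeff_one_boxConv, boxInv, boxInvCoeff, hw]
  · have hcw : (coeff 1 f * w) ^ (m + 2) = 1 := by rw [hw, one_pow]
    rw [coeff_boxConv_eq_add _ _ (by omega), coeff_boxInv_add_two, coeff_X, if_neg (by omega)]
    linear_combination (-∑ π ∈ {NCPart.bot}ᶜ,
      coeffProd f π.1 * coeffProd (boxInv f w) (kreweras π).1) * hcw

lemma exists_boxConv_eq_X {f : PowerSeries R} (hf : memG1 f) :
    ∃ g, memG1 g ∧ boxConv f g = X ∧ boxConv g f = X := by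
  obtain ⟨u, hu⟩ := hf.2
  have hg := boxConv_boxInv (f := f) (w := ↑u⁻¹) (by rw [← hu, Units.mul_inv])
  exact ⟨boxInv f ↑u⁻¹, memG1_boxInv f u⁻¹.isUnit, hg, boxConv_comm _ f ▸ hg⟩

noncomputable def enum (V : Finset (Fin n)) : Fin #V ↪o Fin n := V.orderEmbOfFin rfl

lemma enum_mem (V : Finset (Fin n)) (i : Fin #V) : enum V i ∈ V := orderEmbOfFin_mem V rfl i

lemma exists_enum_eq {V : Finset (Fin n)} {x : Fin n} (hx : x ∈ V) : ∃ i, enum V i = x := by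
  rw [← mem_coe, ← range_orderEmbOfFin V rfl] at hx
  exact hx

noncomputable def restrictBlock (V : Finset (Fin n)) (σ : FinPartition n) : FinPartition #V :=
  open Classical in Finpartition.ofSetoid (Setoid.ker (σ.part ∘ enum V))

noncomputable def liftBlock (V : Finset (Fin n)) (s : FinPartition #V) : Finpartition V where
  parts := s.parts.image fun A => A.image (enum V)
  supIndep := by
    rw [supIndep_iff_pairwiseDisjoint]
    rintro _ hB _ hC hBC
    obtain ⟨A₁, hA₁, rfl⟩ := mem_image.1 hB
    obtain ⟨A₂, hA₂, rfl⟩ := mem_image.1 hC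
    exact disjoint_image (enum V).injective |>.2
      (s.disjoint hA₁ hA₂ fun h => hBC (congrArg _ h))
  sup_parts := by
    ext x
    rw [mem_sup]
    constructor
    · rintro ⟨B, hB, hx⟩
      obtain ⟨A, -, rfl⟩ := mem_image.1 hB
      obtain ⟨i, -, rfl⟩ := mem_image.1 hx
      exact enum_mem V i
    · intro hx
      obtain ⟨i, rfl⟩ := exists_enum_eq hx
      exact ⟨_, mem_image_of_mem _ (s.part_mem_parts i), mem_image_of_mem _ (s.mem_part_univ i)⟩
  bot_notMem h := by
    obtain ⟨A, hA, hAe⟩ := mem_image.1 h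
    exact s.ne_empty hA (image_eq_empty.1 hAe)

section restrictBlock

variable {V : Finset (Fin n)} {π σ : FinPartition n}

lemma mem_part_restrictBlock {i j : Fin #V} :
    j ∈ (restrictBlock V σ).part i ↔ σ.part (enum V i) = σ.part (enum V j) := by
  classical
  exact mem_part_ofSetoid_iff_rel.trans Setoid.ker_def

lemma image_part_restrictBlock {i : Fin #V} (hV : σ.part (enum V i) ⊆ V) :
    ((restrictBlock V σ).part i).image (enum V) = σ.part (enum V i) := by
  ext x
  simp only [mem_image, mem_part_restrictBlock]
  constructor
  · rintro ⟨j, hij, rfl⟩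
    exact hij ▸ σ.mem_part_univ _
  · intro hx
    obtain ⟨j, rfl⟩ := exists_enum_eq (hV hx)
    exact ⟨j, (part_eq_part_of_mem hx).symm, rfl⟩

lemma mem_parts_liftBlock {s : FinPartition #V} {B : Finset (Fin n)} :
    B ∈ (liftBlock V s).parts ↔ ∃ A ∈ s.parts, A.image (enum V) = B :=
  mem_image

lemma coeffProd_liftBlock (f : PowerSeries R) (s : FinPartition #V) :
    coeffProd f (liftBlock V s) = coeffProd f s := by
  rw [coeffProd, coeffProd, liftBlock, prod_image fun A _ B _ h =>
    image_injective (enum V).injective h]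
  simp only [card_image_of_injective _ (enum V).injective]

lemma card_parts_liftBlock (s : FinPartition #V) : #(liftBlock V s).parts = #s.parts :=
  card_image_of_injective _ (image_injective (enum V).injective)

lemma bind_restrictBlock (hσπ : σ ≤ π) :
    (π.bind fun V _ => liftBlock V (restrictBlock V σ)) = σ := by
  refine ext_part fun x => ?_
  obtain ⟨i, hi⟩ := exists_enum_eq (π.mem_part_univ x)
  have hsub : σ.part (enum (π.part x) i) ⊆ π.part x := by
    rw [hi]
    exact part_subset_part_of_le hσπ x
  have hB := image_part_restrictBlock hsub
  rw [hi] at hB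
  exact part_bind (π.part_mem_parts x) (mem_parts_liftBlock.2 ⟨_, part_mem_parts _ i, hB⟩)
    (σ.mem_part_univ x)

lemma restrictBlock_bind (s : ∀ V ∈ π.parts, FinPartition #V) (hV : V ∈ π.parts) :
    restrictBlock V (π.bind fun W hW => liftBlock W (s W hW)) = s V hV := by
  refine ext_part fun i => ?_
  have hpart : (π.bind fun W hW => liftBlock W (s W hW)).part (enum V i) =
      ((s V hV).part i).image (enum V) :=
    part_bind hV (mem_parts_liftBlock.2 ⟨_, part_mem_parts _ i, rfl⟩)
      (mem_image_of_mem _ (mem_part_univ _ i))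
  ext j
  rw [mem_part_restrictBlock, hpart]
  constructor
  · intro h
    obtain ⟨k, hk, hkj⟩ := mem_image.1 (h ▸ mem_part_univ _ (enum V j))
    rw [← (enum V).injective hkj]
    exact hk
  · intro hj
    rw [part_bind hV (mem_parts_liftBlock.2 ⟨_, part_mem_parts _ i, rfl⟩)
      (mem_image_of_mem _ hj)]

lemma IsNoncrossing.restrictBlock (hσ : IsNoncrossing σ) (V : Finset (Fin n)) :
    IsNoncrossing (restrictBlock V σ) := by
  rw [IsNoncrossing, isNCFamily_iff] at hσ ⊢
  intro a b c d A₁ A₂ hab hbc hcd hA₁ hA₂ hne ha hc hb hd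
  rw [← (_root_.restrictBlock V σ).part_eq_of_mem hA₁ ha, mem_part_restrictBlock] at hc
  rw [← (_root_.restrictBlock V σ).part_eq_of_mem hA₂ hb, mem_part_restrictBlock] at hd
  have hab' : σ.part (enum V a) ≠ σ.part (enum V b) := fun h => hne <| by
    rw [← (_root_.restrictBlock V σ).part_eq_of_mem hA₁ ha,
      ← (_root_.restrictBlock V σ).part_eq_of_mem hA₂ hb]
    exact (part_eq_part_of_mem (mem_part_restrictBlock.2 h)).symm
  exact hσ _ _ _ _ _ _ ((enum V).lt_iff_lt.2 hab) ((enum V).lt_iff_lt.2 hbc)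
    ((enum V).lt_iff_lt.2 hcd) (σ.part_mem_parts _) (σ.part_mem_parts _) hab'
    (σ.mem_part_univ _) (hc ▸ σ.mem_part_univ _) (σ.mem_part_univ _) (hd ▸ σ.mem_part_univ _)

lemma IsNoncrossing.bind (hπ : IsNoncrossing π) (s : ∀ V ∈ π.parts, FinPartition #V)
    (hs : ∀ V hV, IsNoncrossing (s V hV)) :
    IsNoncrossing (π.bind fun V hV => liftBlock V (s V hV)) := by
  rw [IsNoncrossing, isNCFamily_iff]
  intro a b c d B₁ B₂ hab hbc hcd hB₁ hB₂ hne ha hc hb hd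
  obtain ⟨V₁, hV₁, hB₁'⟩ := mem_bind.1 hB₁
  obtain ⟨V₂, hV₂, hB₂'⟩ := mem_bind.1 hB₂
  obtain ⟨A₁, hA₁, rfl⟩ := mem_parts_liftBlock.1 hB₁'
  obtain ⟨A₂, hA₂, rfl⟩ := mem_parts_liftBlock.1 hB₂'
  obtain ⟨i, hi, rfl⟩ := mem_image.1 ha
  obtain ⟨j, hj, rfl⟩ := mem_image.1 hb
  obtain ⟨k, hk, rfl⟩ := mem_image.1 hc
  obtain ⟨l, hl, rfl⟩ := mem_image.1 hd
  rcases eq_or_ne V₁ V₂ with rfl | hV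
  · exact (isNCFamily_iff _).1 (hs V₁ hV₁) i j k l A₁ A₂ ((enum V₁).lt_iff_lt.1 hab)
      ((enum V₁).lt_iff_lt.1 hbc) ((enum V₁).lt_iff_lt.1 hcd) hA₁ hA₂
      (fun h => hne (h ▸ rfl)) hi hk hj hl
  · exact (isNCFamily_iff _).1 hπ _ _ _ _ V₁ V₂ hab hbc hcd hV₁ hV₂ hV
      (enum_mem _ i) (enum_mem _ k) (enum_mem _ j) (enum_mem _ l)

end restrictBlock

section localGlobal

variable {V : Finset (Fin n)} {π σ : FinPartition n}

lemma IsNoncrossing.inf (hπ : IsNoncrossing π) (hσ : IsNoncrossing σ) :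
    IsNoncrossing (π ⊓ σ) := by
  rw [IsNoncrossing, isNCFamily_iff] at hπ hσ ⊢
  intro a b c d M₁ M₂ hab hbc hcd hM₁ hM₂ hne ha hc hb hd
  rw [← (π ⊓ σ).part_eq_of_mem hM₁ ha, part_inf] at hc
  rw [← (π ⊓ σ).part_eq_of_mem hM₂ hb, part_inf] at hd
  have hne' : π.part a ∩ σ.part a ≠ π.part b ∩ σ.part b := fun h => hne <| by
    rw [← (π ⊓ σ).part_eq_of_mem hM₁ ha, ← (π ⊓ σ).part_eq_of_mem hM₂ hb, part_inf, part_inf, h]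
  by_cases hab' : π.part a = π.part b
  · exact hσ a b c d _ _ hab hbc hcd (σ.part_mem_parts a) (σ.part_mem_parts b)
      (fun h => hne' (by rw [hab', h])) (σ.mem_part_univ a) (mem_inter.1 hc).2
      (σ.mem_part_univ b) (mem_inter.1 hd).2
  · exact hπ a b c d _ _ hab hbc hcd (π.part_mem_parts a) (π.part_mem_parts b) hab'
      (π.mem_part_univ a) (mem_inter.1 hc).1 (π.mem_part_univ b) (mem_inter.1 hd).1

lemma IsNoncrossing.part_subset_Ioc (hπ : IsNoncrossing π) (hV : V ∈ π.parts) {a b z : Fin n}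
    (ha : a ∈ V) (hb : b ∈ V) (hz : z ∈ Ioc a b) (hzV : π.part z ≠ V) :
    π.part z ⊆ Ioc a b := by
  have hNC := (isNCFamily_iff _).1 hπ
  have hnot : ∀ {w}, w ∈ π.part z → w ∉ V := fun hw hwV =>
    hzV ((part_eq_part_of_mem hw).symm.trans (π.part_eq_of_mem hV hwV))
  rw [mem_Ioc] at hz
  have hzb : z < b := lt_of_le_of_ne hz.2 fun h => hnot (π.mem_part_univ z) (h ▸ hb)
  intro w hw
  rw [mem_Ioc]
  by_contra hw'
  rcases le_or_gt w a with hwa | haw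
  · have hwa' : w < a := lt_of_le_of_ne hwa fun h => hnot hw (h ▸ ha)
    exact hNC w a z b _ V hwa' hz.1 hzb (π.part_mem_parts z) hV hzV hw
      (π.mem_part_univ z) ha hb
  · exact hNC a z b w V _ hz.1 hzb (lt_of_not_ge fun hwb => hw' ⟨haw, hwb⟩) hV
      (π.part_mem_parts z) (Ne.symm hzV) ha hb (π.mem_part_univ z) hw

lemma enum_mem_Ioc_iff {i j k : Fin #V} : enum V k ∈ Ioc (enum V i) (enum V j) ↔ k ∈ Ioc i j := by
  simp only [mem_Ioc, (enum V).lt_iff_lt, (enum V).le_iff_le]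

lemma isSaturated_Ioc_restrictBlock_iff (hπ : IsNoncrossing π) (hσπ : σ ≤ π) (hV : V ∈ π.parts)
    (i j : Fin #V) :
    (restrictBlock V σ).IsSaturated (Ioc i j) ↔ σ.IsSaturated (Ioc (enum V i) (enum V j)) := by
  constructor
  · intro hloc z hz w hw
    by_cases hzV : π.part z = V
    · obtain ⟨k, rfl⟩ := exists_enum_eq (hzV ▸ π.mem_part_univ z)
      obtain ⟨l, rfl⟩ := exists_enum_eq (hzV ▸ part_subset_part_of_le hσπ _ hw)
      exact enum_mem_Ioc_iff.2 (hloc (enum_mem_Ioc_iff.1 hz)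
        (mem_part_restrictBlock.2 (part_eq_part_of_mem hw).symm))
    · exact hπ.part_subset_Ioc hV (enum_mem V i) (enum_mem V j) hz hzV
        (part_subset_part_of_le hσπ z hw)
  · intro hglob k hk l hl
    rw [mem_part_restrictBlock] at hl
    exact enum_mem_Ioc_iff.1 (hglob (enum_mem_Ioc_iff.2 hk) (hl ▸ σ.mem_part_univ _))

lemma krewerasRel_restrictBlock_iff (hπ : IsNoncrossing π) (hσπ : σ ≤ π) (hV : V ∈ π.parts)
    {i j : Fin #V} : KrewerasRel (restrictBlock V σ) i j ↔ KrewerasRel σ (enum V i) (enum V j) := by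
  rcases le_total i j with hij | hji
  · rw [KrewerasRel.iff_of_le hij, KrewerasRel.iff_of_le ((enum V).monotone hij)]
    exact isSaturated_Ioc_restrictBlock_iff hπ hσπ hV i j
  · rw [KrewerasRel.comm, KrewerasRel.comm (b := enum V i), KrewerasRel.iff_of_le hji,
      KrewerasRel.iff_of_le ((enum V).monotone hji)]
    exact isSaturated_Ioc_restrictBlock_iff hπ hσπ hV j i

end localGlobal

section relativeComplement

variable {π σ : FinPartition n}

lemma bind_krewerasCompl_restrictBlock (hπ : IsNoncrossing π) (hσπ : σ ≤ π) :
    (π.bind fun V _ => liftBlock V (krewerasCompl (restrictBlock V σ))) =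
      π ⊓ krewerasCompl σ := by
  refine ext_part fun x => ?_
  set V := π.part x with hpx
  have hV : V ∈ π.parts := π.part_mem_parts x
  obtain ⟨i, hi⟩ : ∃ i, enum V i = x := exists_enum_eq (π.mem_part_univ x)
  clear_value V
  have hB := mem_parts_liftBlock.2 ⟨_, part_mem_parts (krewerasCompl (restrictBlock V σ)) i, rfl⟩
  rw [part_bind hV hB (by rw [← hi]; exact mem_image_of_mem _ (mem_part_univ _ i)), part_inf,
    ← hpx]
  ext y
  rw [mem_image, mem_inter]
  constructor
  · rintro ⟨l, hl, rfl⟩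
    rw [mem_part_krewerasCompl, krewerasRel_restrictBlock_iff hπ hσπ hV, hi] at hl
    exact ⟨enum_mem V l, mem_part_krewerasCompl.2 hl⟩
  · rintro ⟨hyV, hyK⟩
    obtain ⟨l, rfl⟩ := exists_enum_eq hyV
    rw [mem_part_krewerasCompl, ← hi, ← krewerasRel_restrictBlock_iff hπ hσπ hV] at hyK
    exact ⟨l, mem_part_krewerasCompl.2 hyK, rfl⟩

/-- Sum the rank identity over the blocks of `π`, on which `π ⊓ K(σ)` restricts to the Kreweras
complements of the restrictions of `σ`. -/
lemma card_parts_inf_krewerasCompl (hπ : IsNoncrossing π) (hσ : IsNoncrossing σ) (hσπ : σ ≤ π) :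
    #(π ⊓ krewerasCompl σ).parts + #σ.parts = n + #π.parts := by
  have hσ' : #σ.parts = ∑ V ∈ π.parts.attach, #(restrictBlock V.1 σ).parts := by
    conv_lhs => rw [← bind_restrictBlock hσπ]
    rw [card_bind]
    exact sum_congr rfl fun V _ => card_parts_liftBlock _
  have hblock : ∀ V ∈ π.parts.attach,
      #(liftBlock V.1 (krewerasCompl (restrictBlock V.1 σ))).parts +
        #(restrictBlock V.1 σ).parts = #V.1 + 1 := by
    intro V _
    have : NeZero #V.1 := ⟨(card_pos.2 (π.nonempty_of_mem_parts V.2)).ne'⟩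
    rw [card_parts_liftBlock, add_comm]
    exact card_parts_add_card_parts_krewerasCompl (hσ.restrictBlock V.1)
  rw [← bind_krewerasCompl_restrictBlock hπ hσπ, card_bind, hσ', ← sum_add_distrib,
    sum_congr rfl hblock, sum_add_distrib, sum_attach π.parts card, sum_card_parts, card_univ,
    Fintype.card_fin, sum_const, card_attach, smul_eq_mul, mul_one]

lemma krewerasCompl_anti (hσπ : σ ≤ π) : krewerasCompl π ≤ krewerasCompl σ := by
  intro B hB
  obtain ⟨b, hb⟩ := (krewerasCompl π).nonempty_of_mem_parts hB
  exact ⟨_, part_mem_parts _ b, fun y hy =>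
    mem_part_krewerasCompl.2 ((krewerasRel_of_mem_parts hB hb hy).of_le hσπ)⟩

lemma krewerasCompl_eq_inf [NeZero n] (hπ : IsNoncrossing π) (hσ : IsNoncrossing σ)
    (hσπ : σ ≤ π) :
    krewerasCompl π = krewerasCompl σ ⊓ krewerasCompl (π ⊓ krewerasCompl σ) := by
  refine eq_of_le_of_card_parts_le
    (le_inf (krewerasCompl_anti hσπ) (krewerasCompl_anti inf_le_left)) ?_
  have h₁ := card_parts_inf_krewerasCompl hπ hσ hσπ
  have h₂ := card_parts_inf_krewerasCompl (isNoncrossing_krewerasCompl σ)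
    (hπ.inf (isNoncrossing_krewerasCompl σ)) inf_le_right
  have h₃ := card_parts_add_card_parts_krewerasCompl hπ
  have h₄ := card_parts_add_card_parts_krewerasCompl hσ
  omega

lemma eq_of_krewerasCompl_eq [NeZero n] (hπ : IsNoncrossing π) (hσ : IsNoncrossing σ)
    (h : krewerasCompl π = krewerasCompl σ) : π = σ :=
  congrArg Subtype.val (NCPart.kreweras_injective (a₁ := ⟨π, hπ⟩) (a₂ := ⟨σ, hσ⟩)
    (Subtype.ext (by rw [kreweras_val, kreweras_val]; exact h)))

lemma eq_of_inf_krewerasCompl_eq {ρ τ₁ τ₂ : FinPartition n} (hρ : IsNoncrossing ρ)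
    (h₁ : IsNoncrossing τ₁) (h₂ : IsNoncrossing τ₂) (hτ₁ : τ₁ ≤ ρ) (hτ₂ : τ₂ ≤ ρ)
    (h : ρ ⊓ krewerasCompl τ₁ = ρ ⊓ krewerasCompl τ₂) : τ₁ = τ₂ := by
  have hrestrict : ∀ τ, τ ≤ ρ → ∀ V (hV : V ∈ ρ.parts),
      restrictBlock V (ρ ⊓ krewerasCompl τ) = krewerasCompl (restrictBlock V τ) :=
    fun τ hτ V hV => by
      rw [← bind_krewerasCompl_restrictBlock hρ hτ]
      exact restrictBlock_bind (fun W _ => krewerasCompl (restrictBlock W τ)) hV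
  have key : ∀ V (hV : V ∈ ρ.parts), restrictBlock V τ₁ = restrictBlock V τ₂ := by
    intro V hV
    have : NeZero #V := ⟨(card_pos.2 (ρ.nonempty_of_mem_parts hV)).ne'⟩
    refine eq_of_krewerasCompl_eq (h₁.restrictBlock V) (h₂.restrictBlock V) ?_
    rw [← hrestrict _ hτ₁ V hV, ← hrestrict _ hτ₂ V hV, h]
  calc τ₁ = ρ.bind fun V _ => liftBlock V (restrictBlock V τ₁) := (bind_restrictBlock hτ₁).symm
    _ = ρ.bind fun V _ => liftBlock V (restrictBlock V τ₂) := by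
      congr 1
      funext V hV
      rw [key V hV]
    _ = τ₂ := bind_restrictBlock hτ₂

end relativeComplement

namespace NCPart

def inf (π ρ : NCPart n) : NCPart n := ⟨π.1 ⊓ ρ.1, π.2.inf ρ.2⟩

variable {π σ : NCPart n}

lemma inf_le_left (π ρ : NCPart n) : inf π ρ ≤ π := _root_.inf_le_left (a := π.1)

lemma inf_le_right (π ρ : NCPart n) : inf π ρ ≤ ρ := _root_.inf_le_right (a := π.1)

lemma kreweras_eq_inf [NeZero n] (h : σ ≤ π) :
    kreweras π = inf (kreweras σ) (kreweras (inf π (kreweras σ))) :=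
  Subtype.ext (by simpa only [kreweras_val, inf] using krewerasCompl_eq_inf π.2 σ.2 h)

lemma eq_of_inf_kreweras_eq {ρ τ₁ τ₂ : NCPart n} (hτ₁ : τ₁ ≤ ρ) (hτ₂ : τ₂ ≤ ρ)
    (h : inf ρ (kreweras τ₁) = inf ρ (kreweras τ₂)) : τ₁ = τ₂ :=
  Subtype.ext (eq_of_inf_krewerasCompl_eq ρ.2 τ₁.2 τ₂.2 hτ₁ hτ₂
    (by simpa only [inf, kreweras_val] using congrArg Subtype.val h))

open Classical in
/-- `π ↦ π ⊓ K(σ)` maps `[σ, 1̂]` bijectively onto `[0̂, K(σ)]`, with inverse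
`τ ↦ K⁻¹(K(σ) ⊓ K(τ))`. -/
lemma sum_le_eq_sum_le_kreweras [NeZero n] {M : Type*} [AddCommMonoid M] (σ : NCPart n)
    (F : NCPart n → NCPart n → M) :
    ∑ π ∈ {π | σ ≤ π}, F (inf π (kreweras σ)) (kreweras π) =
      ∑ τ ∈ {τ | τ ≤ kreweras σ}, F τ (inf (kreweras σ) (kreweras τ)) := by
  refine sum_nbij' (fun π => inf π (kreweras σ))
    (fun τ => (kreweras (inf (kreweras σ) (kreweras τ)).rev).rev) ?_ ?_ ?_ ?_ ?_ <;>
    simp only [mem_filter, mem_univ, true_and]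
  · exact fun π _ => inf_le_right π _
  · exact fun τ _ => le_kreweras_iff_le_rev_kreweras_rev.1 (inf_le_left _ _)
  · intro π hπ
    rw [← kreweras_eq_inf hπ, rev_kreweras_rev_kreweras]
  · intro τ hτ
    have hσπ : σ ≤ (kreweras (inf (kreweras σ) (kreweras τ)).rev).rev :=
      le_kreweras_iff_le_rev_kreweras_rev.1 (inf_le_left _ _)
    refine eq_of_inf_kreweras_eq (inf_le_right _ _) hτ ?_
    rw [← kreweras_eq_inf hσπ, kreweras_rev_kreweras_rev]
  · intro π hπ
    rw [← kreweras_eq_inf hπ]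

end NCPart

open Classical in
/-- Expanding each factor `(f ⊠ g)_{|V|}` over `NC(V)` and gluing the chosen partitions of the
blocks gives a sum over the `σ ≤ π`. -/
lemma coeffProd_boxConv (f g : PowerSeries R) (π : NCPart n) :
    coeffProd (boxConv f g) π.1 =
      ∑ σ ∈ {σ : NCPart n | σ ≤ π},
        coeffProd f σ.1 * coeffProd g (NCPart.inf π (kreweras σ)).1 := by
  have hcoeff : ∀ V ∈ π.1.parts, coeff #V (boxConv f g) =
      ∑ s : NCPart #V, coeffProd f s.1 * coeffProd g (kreweras s).1 := fun V hV =>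
    coeff_boxConv f g (card_pos.2 (π.1.nonempty_of_mem_parts hV)).ne'
  rw [coeffProd, prod_congr rfl hcoeff, prod_sum]
  refine sum_nbij'
    (fun p => ⟨π.1.bind fun V hV => liftBlock V (p V hV).1, π.2.bind _ fun V hV => (p V hV).2⟩)
    (fun σ V _ => ⟨restrictBlock V σ.1, σ.2.restrictBlock V⟩) ?_ ?_ ?_ ?_ ?_
  · exact fun p _ => mem_filter.2 ⟨mem_univ _, bind_le _ _⟩
  · exact fun σ _ => mem_pi.2 fun V hV => mem_univ _
  · intro p _
    funext V hV
    exact Subtype.ext (restrictBlock_bind (fun W hW => (p W hW).1) hV)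
  · intro σ hσ
    exact Subtype.ext (bind_restrictBlock (mem_filter.1 hσ).2)
  · intro p _
    have hK : π.1 ⊓ krewerasCompl (π.1.bind fun V hV => liftBlock V (p V hV).1) =
        π.1.bind fun V hV => liftBlock V (krewerasCompl (p V hV).1) := by
      rw [← bind_krewerasCompl_restrictBlock π.2 (bind_le _ _)]
      congr 1
      funext V hV
      rw [restrictBlock_bind (fun W hW => (p W hW).1) hV]
    simp only [NCPart.inf, kreweras_val, hK, coeffProd_bind, coeffProd_liftBlock,
      ← prod_mul_distrib]

open Classical in
lemma boxConv_assoc (f g h : PowerSeries R) :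
    boxConv (boxConv f g) h = boxConv f (boxConv g h) := by
  ext m
  rcases eq_or_ne m 0 with rfl | hm
  · simp only [coeff_zero_eq_constantCoeff_apply, constantCoeff_boxConv]
  have : NeZero m := ⟨hm⟩
  rw [coeff_boxConv _ _ hm, coeff_boxConv _ _ hm]
  calc ∑ π : NCPart m, coeffProd (boxConv f g) π.1 * coeffProd h (kreweras π).1
      = ∑ π : NCPart m, ∑ σ ∈ {σ | σ ≤ π}, coeffProd f σ.1 *
          coeffProd g (NCPart.inf π (kreweras σ)).1 * coeffProd h (kreweras π).1 := by
        simp only [coeffProd_boxConv, sum_mul]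
    _ = ∑ σ : NCPart m, ∑ π ∈ {π | σ ≤ π}, coeffProd f σ.1 *
          coeffProd g (NCPart.inf π (kreweras σ)).1 * coeffProd h (kreweras π).1 :=
        sum_comm' fun _ _ => by simp only [mem_filter, mem_univ, true_and, and_true]
    _ = ∑ σ : NCPart m, ∑ τ ∈ {τ | τ ≤ kreweras σ}, coeffProd f σ.1 *
          coeffProd g τ.1 * coeffProd h (NCPart.inf (kreweras σ) (kreweras τ)).1 :=
        sum_congr rfl fun σ _ => NCPart.sum_le_eq_sum_le_kreweras σ
          fun τ κ => coeffProd f σ.1 * coeffProd g τ.1 * coeffProd h κ.1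
    _ = ∑ σ : NCPart m, coeffProd f σ.1 * coeffProd (boxConv g h) (kreweras σ).1 := by
        simp only [coeffProd_boxConv, mul_sum, mul_assoc]

/-- `𝔊¹(R)`, the series `∑_{n≥1} rₙ zⁿ` with `r₁ ∈ R^×`, is a group under boxed
convolution with identity `z`, and for `s = 1` this group is abelian. -/
theorem G1_abelian_group_under_boxConv :
    (∀ f g : PowerSeries R, memG1 f → memG1 g → memG1 (boxConv f g)) ∧
    (∀ f g h : PowerSeries R, memG1 f → memG1 g → memG1 h →
      boxConv (boxConv f g) h = boxConv f (boxConv g h)) ∧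
    memG1 (PowerSeries.X : PowerSeries R) ∧
    (∀ f : PowerSeries R, memG1 f →
      boxConv PowerSeries.X f = f ∧ boxConv f PowerSeries.X = f) ∧
    (∀ f : PowerSeries R, memG1 f → ∃ g : PowerSeries R, memG1 g ∧
      boxConv f g = PowerSeries.X ∧ boxConv g f = PowerSeries.X) ∧
    (∀ f g : PowerSeries R, memG1 f → memG1 g → boxConv f g = boxConv g f) :=
  ⟨fun _ _ => memG1_boxConv,
    fun f g h _ _ _ => boxConv_assoc f g h,
    memG1_X,
    fun _ hf => ⟨boxConv_X_left hf.1, boxConv_X_right hf.1⟩,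
    fun _ => exists_boxConv_eq_X,
    fun f g _ _ => boxConv_comm f g⟩
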